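/- For every α ∈ ℂ, the algebra 𝔠₁₆(α) on ℂ⁵ with nonzero basis products e₁e₁ = e₂, e₁e₂ = e₄, e₁e₄ = (α+1)e₅, e₂e₂ = α e₅, e₃e₃ = e₄ is a nilpotent commutative algebra (A⁶ = 0) that satisfies the almost-Jordan identity 2·(((y·x)·x)·x) + y·((x·x)·x) = 3·((y·(x·x))·x) for all x, y, but does not satisfy the Jordan identity: there exist x, y with ((x·x)·y)·x ≠ (x·x)·(y·x). -/

import Mathlib

/-!
Give the basis vectors `e₁, …, e₅` the weights `1, 2, 1, 3, 4`. The coefficient of `e_k` in `eᵢ eⱼ`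
vanishes unless `wt i + wt j ≤ wt k`, so a product of `n` elements only involves basis vectors of
weight `≥ n`; as all weights are `≤ 4`, products of five (hence six) elements vanish.
For the identities, every left-normed product `((x y) z) w` equals `(α + 1) x₁ y₁ z₁ w₁ e₅` and
every product `(x y)(z w)` equals `α x₁ y₁ z₁ w₁ e₅`: the three terms of the almost-Jordan identity
are left-normed up to commutativity, while the two sides of the Jordan identity differ by
`x₁³ y₁ e₅`.
-/

/-- `IsProdOf μ n z` says that `z` is a product of `n` elements under the
multiplication `μ`, with some arrangement of parentheses. -/
inductive IsProdOf {V : Type*} (μ : V → V → V) : ℕ → V → Prop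
  | base (x : V) : IsProdOf μ 1 x
  | mul {m n : ℕ} {a b : V} :
      IsProdOf μ m a → IsProdOf μ n b → IsProdOf μ (m + n) (μ a b)

/-- Structure constants of the algebra 𝔠₁₆(α) (e₁e₁ = e₂, e₁e₂ = e₄, e₁e₄ = (α+1)e₅, e₂e₂ = α e₅, e₃e₃ = e₄) on ℂ⁵ (basis `e₁, …, e₅` indexed by `Fin 5`),
extended symmetrically; unlisted products of basis vectors are zero. -/
noncomputable def tbl16 (α : ℂ) : Fin 5 → Fin 5 → Fin 5 → ℂ :=
  ![![![0,1,0,0,0], ![0,0,0,1,0], 0, ![0,0,0,0,α+1], 0],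
    ![![0,0,0,1,0], ![0,0,0,0,α], 0, 0, 0],
    ![0, 0, ![0,0,0,1,0], 0, 0],
    ![![0,0,0,0,α+1], 0, 0, 0, 0],
    0]

/-- The bilinear multiplication of the algebra on ℂ⁵. -/
noncomputable def mul16 (α : ℂ) (x y : Fin 5 → ℂ) : Fin 5 → ℂ :=
  fun k => ∑ i, ∑ j, x i * y j * tbl16 α i j k

section StructConstMul

variable {ι R : Type*} [Fintype ι] [CommSemiring R]

def structConstMul (T : ι → ι → ι → R) (x y : ι → R) : ι → R :=
  fun k => ∑ i, ∑ j, x i * y j * T i j k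

theorem structConstMul_comm {T : ι → ι → ι → R} (hT : ∀ i j, T i j = T j i) (x y : ι → R) :
    structConstMul T x y = structConstMul T y x := by
  funext k
  rw [structConstMul, structConstMul, Finset.sum_comm]
  simp only [hT, mul_comm (x _)]

variable {T : ι → ι → ι → R} {wt : ι → ℕ}

theorem structConstMul_apply_eq_zero (hT : ∀ i j k, wt k < wt i + wt j → T i j k = 0)
    {m n : ℕ} {a b : ι → R} (ha : ∀ i, wt i < m → a i = 0) (hb : ∀ j, wt j < n → b j = 0)
    {k : ι} (hk : wt k < m + n) : structConstMul T a b k = 0 := by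
  refine Finset.sum_eq_zero fun i _ => Finset.sum_eq_zero fun j _ => ?_
  by_cases hi : wt i < m
  · simp [ha i hi]
  by_cases hj : wt j < n
  · simp [hb j hj]
  simp [hT i j k (by omega)]

theorem IsProdOf.apply_eq_zero_of_lt (hwt : ∀ i, 1 ≤ wt i)
    (hT : ∀ i j k, wt k < wt i + wt j → T i j k = 0) {n : ℕ} {z : ι → R}
    (hz : IsProdOf (structConstMul T) n z) {k : ι} (hk : wt k < n) : z k = 0 := by
  induction hz generalizing k with
  | base => exact absurd (hwt k) (by omega)
  | mul _ _ iha ihb => exact structConstMul_apply_eq_zero hT (fun _ => iha) (fun _ => ihb) hk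

end StructConstMul

section C16

variable (α : ℂ)

theorem tbl16_symm (i j : Fin 5) : tbl16 α i j = tbl16 α j i := by
  fin_cases i <;> fin_cases j <;> rfl

theorem mul16_comm (x y : Fin 5 → ℂ) : mul16 α x y = mul16 α y x :=
  structConstMul_comm (tbl16_symm α) x y

/-- `wt16 k` is the largest `n` with `e_k ∈ Aⁿ`. -/
def wt16 : Fin 5 → ℕ := ![1, 2, 1, 3, 4]

theorem tbl16_eq_zero_of_lt (i j k : Fin 5) (h : wt16 k < wt16 i + wt16 j) :
    tbl16 α i j k = 0 := by
  fin_cases i <;> fin_cases j <;> fin_cases k <;> simp_all [tbl16, wt16]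

theorem mul16_eq (x y : Fin 5 → ℂ) :
    mul16 α x y = ![0, x 0 * y 0, 0, x 0 * y 1 + x 1 * y 0 + x 2 * y 2,
      (α + 1) * (x 0 * y 3) + α * (x 1 * y 1) + (α + 1) * (x 3 * y 0)] := by
  funext k
  fin_cases k <;> simp [mul16, tbl16, Fin.sum_univ_five]
  ring

theorem mul16_mul16_mul16 (x y z w : Fin 5 → ℂ) :
    mul16 α (mul16 α (mul16 α x y) z) w = ((α + 1) * (x 0 * y 0 * z 0 * w 0)) • Pi.single 4 1 := by
  funext k
  fin_cases k <;> simp [mul16_eq]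

theorem mul16_mul16_mul16_mul16 (x y z w : Fin 5 → ℂ) :
    mul16 α (mul16 α x y) (mul16 α z w) = (α * (x 0 * y 0 * z 0 * w 0)) • Pi.single 4 1 := by
  funext k
  fin_cases k <;> simp [mul16_eq, -mul_eq_mul_left_iff]
  ring

end C16

theorem c16_properties (α : ℂ) :
    (∀ x y : Fin 5 → ℂ, mul16 α x y = mul16 α y x) ∧
    (∀ z : Fin 5 → ℂ, IsProdOf (mul16 α) 6 z → z = 0) ∧
    (∀ x y : Fin 5 → ℂ,
        (2 : ℂ) • mul16 α (mul16 α (mul16 α y x) x) x + mul16 α y (mul16 α (mul16 α x x) x) =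
          (3 : ℂ) • mul16 α (mul16 α y (mul16 α x x)) x) ∧
    (∃ x y : Fin 5 → ℂ,
        mul16 α (mul16 α (mul16 α x x) y) x ≠ mul16 α (mul16 α x x) (mul16 α y x)) := by
  refine ⟨mul16_comm α, fun z hz => ?_, fun x y => ?_, ?_⟩
  · have hwt : ∀ k, 1 ≤ wt16 k := by decide
    funext k
    exact hz.apply_eq_zero_of_lt hwt (tbl16_eq_zero_of_lt α) (by fin_cases k <;> decide)
  · rw [mul16_comm α y (mul16 α (mul16 α x x) x), mul16_comm α y (mul16 α x x),
      mul16_mul16_mul16, mul16_mul16_mul16, mul16_mul16_mul16, smul_smul, smul_smul, ← add_smul]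
    congr 1
    ring
  · refine ⟨Pi.single 0 1, Pi.single 0 1, fun h => ?_⟩
    rw [mul16_mul16_mul16, mul16_mul16_mul16_mul16] at h
    simpa using congrFun h 4
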